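/- If S = S(Z) is a balancing score (i.e., T ⊥ Z | S), then the propensity score p(Z) = E[T | Z] is almost surely a measurable function of S. -/

import Mathlib

/-!
With `p₀ := E[T ∣ S]`, which is `σ(S)`-measurable and hence `σ(Z)`-measurable, it suffices to show
that `p₀` has the same integral as `T` over every event `{Z ∈ B}`. Writing `f := 1_B`, the
pull-out property and the balancing property give
`E[p₀ f(Z)] = E[p₀ E[f(Z) ∣ S]] = E[E[T f(Z) ∣ S]] = E[T f(Z)]`.
So `p(Z) = p₀` a.e., and `p₀` factors measurably through `S` by Doob–Dynkin.
-/

open MeasureTheory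

lemma mul_indicator_one_eq_indicator {α M₀ : Type*} [MulZeroOneClass M₀] (g : α → M₀)
    (s : Set α) : g * s.indicator 1 = s.indicator g := by
  ext a
  by_cases ha : a ∈ s <;> simp [ha]

namespace MeasureTheory

variable {Ω : Type*} {m₀ : MeasurableSpace Ω} {μ : Measure Ω}

lemma condExp_ae_eq_condExp_of_condExp_mul_indicator {m m' : MeasurableSpace Ω}
    [IsFiniteMeasure μ] (hm : m ≤ m') (hm' : m' ≤ m₀) {f : Ω → ℝ} (hf : Integrable f μ)
    (hindep : ∀ s, MeasurableSet[m'] s →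
      μ[f * s.indicator 1 | m] =ᵐ[μ] μ[f | m] * μ[s.indicator 1 | m]) :
    μ[f | m] =ᵐ[μ] μ[f | m'] := by
  refine ae_eq_condExp_of_forall_setIntegral_eq hm' hf
    (fun _ _ _ => integrable_condExp.integrableOn) (fun s hs _ => ?_)
    (stronglyMeasurable_condExp.mono hm).aestronglyMeasurable
  have hs₀ : MeasurableSet[m₀] s := hm' s hs
  have hm₀ : m ≤ m₀ := hm.trans hm'
  have setIntegral_eq (g : Ω → ℝ) :
      ∫ ω in s, g ω ∂μ = ∫ ω, (g * s.indicator 1 : Ω → ℝ) ω ∂μ := by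
    rw [mul_indicator_one_eq_indicator, integral_indicator hs₀]
  have hpull : μ[μ[f | m] * s.indicator 1 | m] =ᵐ[μ] μ[f | m] * μ[s.indicator 1 | m] := by
    refine condExp_mul_of_stronglyMeasurable_left stronglyMeasurable_condExp ?_
      ((integrable_const 1).indicator hs₀)
    rw [mul_indicator_one_eq_indicator]
    exact integrable_condExp.indicator hs₀
  calc ∫ ω in s, μ[f | m] ω ∂μ
      = ∫ ω, (μ[f | m] * s.indicator 1 : Ω → ℝ) ω ∂μ := setIntegral_eq _
    _ = ∫ ω, μ[μ[f | m] * s.indicator 1 | m] ω ∂μ := (integral_condExp hm₀).symm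
    _ = ∫ ω, μ[f * s.indicator 1 | m] ω ∂μ :=
        integral_congr_ae (hpull.trans (hindep s hs).symm)
    _ = ∫ ω, (f * s.indicator 1 : Ω → ℝ) ω ∂μ := integral_condExp hm₀
    _ = ∫ ω in s, f ω ∂μ := (setIntegral_eq f).symm

end MeasureTheory

/-- If `S = S(Z)` is a balancing score (`T ⊥ Z ∣ S`), then the propensity score
`p(Z) = E[T ∣ Z]` is almost surely a measurable function of `S`. -/
theorem balancing_score_propensity_function
    {Ω : Type*} [MeasurableSpace Ω] (μ : Measure Ω) [IsProbabilityMeasure μ]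
    {M : ℕ} (Z : Ω → (Fin M → ℝ)) (hZ : Measurable Z)
    (T : Ω → ℝ) (hT : Measurable T) (hT01 : ∀ ω, T ω = 0 ∨ T ω = 1)
    (S : Ω → ℝ) (S0 : (Fin M → ℝ) → ℝ) (hS0 : Measurable S0)
    (hSZ : S = fun ω => S0 (Z ω))
    (mS : MeasurableSpace Ω) (hmS : mS = MeasurableSpace.comap S inferInstance)
    (hbal : ∀ f : (Fin M → ℝ) → ℝ, Measurable f → (∃ C, ∀ x, |f x| ≤ C) →
      μ[fun ω => T ω * f (Z ω) | mS]
        =ᵐ[μ] fun ω => (μ[T | mS]) ω * (μ[fun ω => f (Z ω) | mS]) ω) :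
    ∃ g : ℝ → ℝ, Measurable g ∧
      μ[T | MeasurableSpace.comap Z inferInstance] =ᵐ[μ] fun ω => g (S ω) := by
  have hmS_le_mZ : mS ≤ MeasurableSpace.comap Z inferInstance := by
    rw [hmS, hSZ]
    exact (hS0.comp (comap_measurable Z)).comap_le
  have hTint : Integrable T μ := by
    refine .of_bound hT.aestronglyMeasurable 1 (ae_of_all _ fun ω => ?_)
    rcases hT01 ω with h | h <;> simp [h]
  have hpropensity : μ[T | mS] =ᵐ[μ] μ[T | MeasurableSpace.comap Z inferInstance] := by
    refine condExp_ae_eq_condExp_of_condExp_mul_indicator hmS_le_mZ hZ.comap_le hTint ?_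
    rintro _ ⟨B, hB, rfl⟩
    exact hbal (B.indicator 1) (measurable_const.indicator hB)
      ⟨1, fun x => by simpa using norm_indicator_le_norm_self (1 : (Fin M → ℝ) → ℝ) x⟩
  have hp₀ : Measurable[MeasurableSpace.comap S inferInstance] μ[T | mS] :=
    hmS ▸ stronglyMeasurable_condExp.measurable
  obtain ⟨g, hg, hfactor⟩ := hp₀.exists_eq_measurable_comp
  exact ⟨g, hg, hpropensity.symm.trans (.of_eq hfactor)⟩
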